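/- arXiv:1707.09765 — 3 statements merged into one kernel-verified Lean document; each statement's English description precedes it below -/
import Mathlib

section
/- Let H be a real Hilbert space, a < b reals, and f : [a,b] → H of bounded pointwise variation with f right continuous at every point. Define ℓ_f(t) := a + (b−a)·pV(f,[a,t])/pV(f,[a,b]) when pV(f,[a,b]) ≠ 0 (and ℓ_f ≡ a otherwise). Then there exists a unique Lipschitz function f̃ : [a,b] → H with Lipschitz constant at most pV(f,[a,b])/(b−a) such that f = f̃ ∘ ℓ_f and f̃(ℓ_f(t−)(1−λ) + ℓ_f(t)λ) = (1−λ)f(t−) + λf(t) for every t ∈ [a,b] and λ ∈ [0,1]. -/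
/-!
Write `V t = pV(f, [a,t])` and `κ = V b / (b - a)`, so that
`‖f y - f x‖ ≤ V y - V x = κ (ℓ y - ℓ x)` for `x ≤ y`. On the range of `ℓ` the factor `f̃` is
forced by `f = f̃ ∘ ℓ` and is `κ`-Lipschitz there; the gaps of that range lie in the jump
intervals `[ℓ(t-), ℓ(t)]`, on which `f̃` must be the affine segment from `f(t-)` to `f(t)`, again
`κ`-Lipschitz because `‖f t - f(t-)‖ ≤ κ (ℓ t - ℓ(t-))`. Right continuity of `f` makes `ℓ` right
continuous, so the jump intervals cover `[a,b]`; this gives existence and, through the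
interpolation identity, uniqueness. Extending `f` and `ℓ` by constants outside `[a,b]` turns the
convention `f(a-) = f(a)` into an honest left limit.
-/

open Set Filter Topology

/-- The normalized arc-length reparametrization `ℓ_f` of a function of bounded variation
on `[a,b]`. -/
noncomputable def arcLength (a b : ℝ) {H : Type*} [NormedAddCommGroup H]
    (f : ℝ → H) (t : ℝ) : ℝ :=
  if eVariationOn f (Set.Icc a b) = 0 then a
  else a + (b - a) * (eVariationOn f (Set.Icc a t)).toReal /
    (eVariationOn f (Set.Icc a b)).toReal

open AffineMap
open scoped NNReal

section LeftLimit

variable {E : Type*} [PseudoMetricSpace E] {f : ℝ → E} {φ : ℝ → ℝ} {κ : ℝ≥0}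

theorem dist_leftLim_apply_le (hφ : Monotone φ) {t : ℝ}
    (hf : Tendsto f (𝓝[<] t) (𝓝 (f.leftLim t)))
    (hfφ : ∀ x y, x ≤ y → dist (f x) (f y) ≤ κ * (φ y - φ x)) :
    dist (f.leftLim t) (f t) ≤ κ * (φ t - φ.leftLim t) :=
  le_of_tendsto_of_tendsto (hf.dist tendsto_const_nhds)
    (((hφ.tendsto_leftLim t).const_sub (φ t)).const_mul (κ : ℝ))
    (eventually_nhdsWithin_of_forall fun x hx => hfφ x t (le_of_lt hx))

theorem dist_apply_leftLim_le (hφ : Monotone φ) {x y : ℝ} (hxy : x < y)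
    (hf : Tendsto f (𝓝[<] y) (𝓝 (f.leftLim y)))
    (hfφ : ∀ x y, x ≤ y → dist (f x) (f y) ≤ κ * (φ y - φ x)) :
    dist (f x) (f.leftLim y) ≤ κ * (φ.leftLim y - φ x) := by
  refine le_of_tendsto_of_tendsto (tendsto_const_nhds.dist hf)
    (((hφ.tendsto_leftLim y).sub_const (φ x)).const_mul (κ : ℝ)) ?_
  filter_upwards [Ioo_mem_nhdsLT hxy] with z hz using hfφ x z hz.1.le

end LeftLimit

section JumpInterpolation

variable {E : Type*} [NormedAddCommGroup E] [NormedSpace ℝ E]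

-- Where `φ t = φ.leftLim t` the parameter is `x / 0 = 0`, giving `f.leftLim t`; under the
-- hypothesis `hjump` used below this is `f t`.
noncomputable def jumpInterp (f : ℝ → E) (φ : ℝ → ℝ) (t s : ℝ) : E :=
  lineMap (f.leftLim t) (f t) ((s - φ.leftLim t) / (φ t - φ.leftLim t))

variable {f : ℝ → E} {φ : ℝ → ℝ} {κ : ℝ≥0} {t t₁ t₂ s s₁ s₂ : ℝ}

theorem jumpInterp_lineMap (hjump : dist (f.leftLim t) (f t) ≤ κ * (φ t - φ.leftLim t))
    (c : ℝ) :
    jumpInterp f φ t (lineMap (φ.leftLim t) (φ t) c) = lineMap (f.leftLim t) (f t) c := by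
  by_cases h : φ t = φ.leftLim t
  · have : f.leftLim t = f t := dist_le_zero.1 (by simpa [h] using hjump)
    simp [jumpInterp, h, this]
  · rw [jumpInterp, lineMap_apply_ring', add_sub_cancel_right,
      mul_div_cancel_right₀ _ (sub_ne_zero.2 h)]

theorem jumpInterp_self (hjump : dist (f.leftLim t) (f t) ≤ κ * (φ t - φ.leftLim t)) :
    jumpInterp f φ t (φ t) = f t := by
  simpa using jumpInterp_lineMap hjump 1

theorem jumpInterp_leftLim : jumpInterp f φ t (φ.leftLim t) = f.leftLim t := by
  simp [jumpInterp]

theorem dist_jumpInterp_jumpInterp_le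
    (hjump : dist (f.leftLim t) (f t) ≤ κ * (φ t - φ.leftLim t)) (s₁ s₂ : ℝ) :
    dist (jumpInterp f φ t s₁) (jumpInterp f φ t s₂) ≤ κ * |s₁ - s₂| := by
  rw [jumpInterp, jumpInterp, dist_lineMap_lineMap, Real.dist_eq, ← sub_div,
    sub_sub_sub_cancel_right, abs_div]
  rcases eq_or_ne (φ t - φ.leftLim t) 0 with hd | hd
  · simp only [hd, abs_zero, div_zero, zero_mul]
    positivity
  · calc |s₁ - s₂| / |φ t - φ.leftLim t| * dist (f.leftLim t) (f t)
        ≤ |s₁ - s₂| / |φ t - φ.leftLim t| * (κ * |φ t - φ.leftLim t|) := by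
          gcongr
          exact hjump.trans (by gcongr; exact le_abs_self _)
      _ = κ * |s₁ - s₂| := by field_simp

theorem dist_jumpInterp_le_mul_sub
    (hjump₁ : dist (f.leftLim t₁) (f t₁) ≤ κ * (φ t₁ - φ.leftLim t₁))
    (hjump₂ : dist (f.leftLim t₂) (f t₂) ≤ κ * (φ t₂ - φ.leftLim t₂))
    (hcross : dist (f t₁) (f.leftLim t₂) ≤ κ * (φ.leftLim t₂ - φ t₁))
    (hs₁ : s₁ ≤ φ t₁) (hs₂ : φ.leftLim t₂ ≤ s₂) :
    dist (jumpInterp f φ t₁ s₁) (jumpInterp f φ t₂ s₂) ≤ κ * (s₂ - s₁) := by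
  have h₁ := dist_jumpInterp_jumpInterp_le hjump₁ s₁ (φ t₁)
  have h₂ := dist_jumpInterp_jumpInterp_le hjump₂ (φ.leftLim t₂) s₂
  rw [jumpInterp_self hjump₁, abs_of_nonpos (sub_nonpos.2 hs₁)] at h₁
  rw [jumpInterp_leftLim, abs_of_nonpos (sub_nonpos.2 hs₂)] at h₂
  calc dist (jumpInterp f φ t₁ s₁) (jumpInterp f φ t₂ s₂)
      ≤ dist (jumpInterp f φ t₁ s₁) (f t₁) + dist (f t₁) (f.leftLim t₂)
        + dist (f.leftLim t₂) (jumpInterp f φ t₂ s₂) := dist_triangle4 _ _ _ _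
    _ ≤ κ * -(s₁ - φ t₁) + κ * (φ.leftLim t₂ - φ t₁) + κ * -(φ.leftLim t₂ - s₂) := by
        gcongr
    _ = κ * (s₂ - s₁) := by ring

theorem dist_jumpInterp_le_mul_abs
    (hjump : ∀ t, dist (f.leftLim t) (f t) ≤ κ * (φ t - φ.leftLim t))
    (hcross : ∀ x y, x < y → dist (f x) (f.leftLim y) ≤ κ * (φ.leftLim y - φ x))
    (hs₁ : s₁ ∈ Icc (φ.leftLim t₁) (φ t₁)) (hs₂ : s₂ ∈ Icc (φ.leftLim t₂) (φ t₂)) :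
    dist (jumpInterp f φ t₁ s₁) (jumpInterp f φ t₂ s₂) ≤ κ * |s₁ - s₂| := by
  rcases lt_trichotomy t₁ t₂ with h | rfl | h
  · refine (dist_jumpInterp_le_mul_sub (hjump t₁) (hjump t₂) (hcross _ _ h)
      hs₁.2 hs₂.1).trans ?_
    rw [abs_sub_comm]
    gcongr
    exact le_abs_self _
  · exact dist_jumpInterp_jumpInterp_le (hjump t₁) s₁ s₂
  · rw [dist_comm]
    refine (dist_jumpInterp_le_mul_sub (hjump t₂) (hjump t₁) (hcross _ _ h)
      hs₂.2 hs₁.1).trans ?_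
    gcongr
    exact le_abs_self _

noncomputable def jumpFill (f : ℝ → E) (φ : ℝ → ℝ) (s : ℝ) : E :=
  jumpInterp f φ (Classical.epsilon fun t => s ∈ Icc (φ.leftLim t) (φ t)) s

theorem jumpFill_eq_jumpInterp
    (hjump : ∀ t, dist (f.leftLim t) (f t) ≤ κ * (φ t - φ.leftLim t))
    (hcross : ∀ x y, x < y → dist (f x) (f.leftLim y) ≤ κ * (φ.leftLim y - φ x))
    (hs : s ∈ Icc (φ.leftLim t) (φ t)) : jumpFill f φ s = jumpInterp f φ t s :=
  dist_le_zero.1 <| by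
    have h := dist_jumpInterp_le_mul_abs hjump hcross
      (Classical.epsilon_spec (p := fun t => s ∈ Icc (φ.leftLim t) (φ t)) ⟨t, hs⟩) hs
    rwa [sub_self, abs_zero, mul_zero] at h

theorem lipschitzOnWith_jumpFill {S T : Set ℝ}
    (hjump : ∀ t, dist (f.leftLim t) (f t) ≤ κ * (φ t - φ.leftLim t))
    (hcross : ∀ x y, x < y → dist (f x) (f.leftLim y) ≤ κ * (φ.leftLim y - φ x))
    (hcover : S ⊆ ⋃ t ∈ T, Icc (φ.leftLim t) (φ t)) : LipschitzOnWith κ (jumpFill f φ) S := by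
  refine LipschitzOnWith.of_dist_le_mul fun s₁ hs₁ s₂ hs₂ => ?_
  obtain ⟨t₁, -, h₁⟩ := mem_iUnion₂.1 (hcover hs₁)
  obtain ⟨t₂, -, h₂⟩ := mem_iUnion₂.1 (hcover hs₂)
  rw [jumpFill_eq_jumpInterp hjump hcross h₁, jumpFill_eq_jumpInterp hjump hcross h₂,
    Real.dist_eq]
  exact dist_jumpInterp_le_mul_abs hjump hcross h₁ h₂

theorem jumpFill_lineMap (hφ : Monotone φ)
    (hjump : ∀ t, dist (f.leftLim t) (f t) ≤ κ * (φ t - φ.leftLim t))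
    (hcross : ∀ x y, x < y → dist (f x) (f.leftLim y) ≤ κ * (φ.leftLim y - φ x))
    {c : ℝ} (hc : c ∈ Icc (0 : ℝ) 1) :
    jumpFill f φ (lineMap (φ.leftLim t) (φ t) c) = lineMap (f.leftLim t) (f t) c := by
  have hs : lineMap (φ.leftLim t) (φ t) c ∈ Icc (φ.leftLim t) (φ t) := by
    rw [← segment_eq_Icc (hφ.leftLim_le le_rfl)]
    exact lineMap_mem_segment ℝ _ _ hc
  rw [jumpFill_eq_jumpInterp hjump hcross hs, jumpInterp_lineMap (hjump t)]

theorem eqOn_jumpFill {S T : Set ℝ} {g : ℝ → E}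
    (hjump : ∀ t, dist (f.leftLim t) (f t) ≤ κ * (φ t - φ.leftLim t))
    (hcross : ∀ x y, x < y → dist (f x) (f.leftLim y) ≤ κ * (φ.leftLim y - φ x))
    (hcover : S ⊆ ⋃ t ∈ T, Icc (φ.leftLim t) (φ t))
    (hg : ∀ t ∈ T, ∀ c ∈ Icc (0 : ℝ) 1,
      g (lineMap (φ.leftLim t) (φ t) c) = lineMap (f.leftLim t) (f t) c) :
    EqOn (jumpFill f φ) g S := by
  intro s hs
  obtain ⟨t, ht, hst⟩ := mem_iUnion₂.1 (hcover hs)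
  set c := (s - φ.leftLim t) / (φ t - φ.leftLim t)
  have hc : c ∈ Icc (0 : ℝ) 1 :=
    ⟨div_nonneg (sub_nonneg.2 hst.1) (sub_nonneg.2 (hst.1.trans hst.2)),
      div_le_one_of_le₀ (sub_le_sub_right hst.2 _) (sub_nonneg.2 (hst.1.trans hst.2))⟩
  have hsc : lineMap (φ.leftLim t) (φ t) c = s := by
    rw [lineMap_apply_ring', div_mul_cancel_of_imp fun h => by linarith [hst.1, hst.2],
      sub_add_cancel]
  calc jumpFill f φ s = lineMap (f.leftLim t) (f t) c := jumpFill_eq_jumpInterp hjump hcross hst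
    _ = g s := by rw [← hg t ht c hc, hsc]

end JumpInterpolation

theorem Icc_subset_biUnion_Icc_leftLim {φ : ℝ → ℝ} (hφ : Monotone φ) {a b : ℝ} (hab : a ≤ b)
    (hrc : ∀ t ∈ Ico a b, ContinuousWithinAt φ (Ici t) t) :
    Icc (φ a) (φ b) ⊆ ⋃ t ∈ Icc a b, Icc (φ.leftLim t) (φ t) := by
  intro s hs
  set T := {t ∈ Icc a b | s ≤ φ t}
  have hbT : b ∈ T := ⟨⟨hab, le_rfl⟩, hs.2⟩
  have hT : BddBelow T := ⟨a, fun t ht => ht.1.1⟩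
  have ht₀ : sInf T ∈ Icc a b := ⟨le_csInf ⟨b, hbT⟩ fun t ht => ht.1.1, csInf_le hT hbT⟩
  refine mem_biUnion ht₀ ⟨?_, ?_⟩
  · refine le_of_tendsto (hφ.tendsto_leftLim _) (eventually_nhdsWithin_of_forall fun x hx => ?_)
    rcases le_or_gt x a with hxa | hax
    · exact (hφ hxa).trans hs.1
    · by_contra h
      exact not_le.2 hx (csInf_le hT ⟨⟨hax.le, (le_of_lt hx).trans ht₀.2⟩, (not_le.1 h).le⟩)
  · rcases ht₀.2.eq_or_lt with h | h
    · rw [h]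
      exact hs.2
    · exact ContinuousWithinAt.closure_le (csInf_mem_closure ⟨b, hbT⟩ hT)
        continuousWithinAt_const ((hrc _ ⟨ht₀.1, h⟩).mono fun t ht => csInf_le hT ht)
        fun t ht => ht.2

section Variation

variable {E : Type*} [PseudoEMetricSpace E] {f : ℝ → E} {a b t x y : ℝ}

theorem eVariationOn_Icc_toReal_sub (hf : BoundedVariationOn f (Icc a b)) (hx : a ≤ x)
    (hxy : x ≤ y) (hy : y ≤ b) :
    (eVariationOn f (Icc a y)).toReal - (eVariationOn f (Icc a x)).toReal =
      (eVariationOn f (Icc x y)).toReal := by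
  have h := eVariationOn.Icc_add_Icc f (s := univ) hx hxy (mem_univ x)
  simp only [univ_inter] at h
  rw [← h, ENNReal.toReal_add (hf.mono (Icc_subset_Icc_right (hxy.trans hy)))
    (hf.mono (Icc_subset_Icc hx hy)), add_sub_cancel_left]

theorem continuousWithinAt_eVariationOn_Icc_toReal (hf : BoundedVariationOn f (Icc a b))
    (ht : t ∈ Ico a b) (hrc : ContinuousWithinAt f (Ici t) t) :
    ContinuousWithinAt (fun y => (eVariationOn f (Icc a y)).toReal) (Icc t b) t := by
  have h0 := (hf.mono (Icc_subset_Icc_left ht.1)).tendsto_eVariationOn_Icc_zero_right t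
    (hrc.mono inter_subset_right)
  have h1 := ((ENNReal.tendsto_toReal ENNReal.zero_ne_top).comp h0).const_add
    (eVariationOn f (Icc a t)).toReal
  rw [ENNReal.toReal_zero, add_zero] at h1
  refine h1.congr' (eventually_nhdsWithin_of_forall fun y hy => ?_)
  rw [Function.comp_apply, Icc_inter_Icc, max_self, min_eq_right hy.2,
    ← eVariationOn_Icc_toReal_sub hf ht.1 hy.1 hy.2, add_sub_cancel]

end Variation

section ArcLength

variable {E : Type*} [NormedAddCommGroup E] {f : ℝ → E} {a b t x y : ℝ}

theorem monotoneOn_arcLength (hf : BoundedVariationOn f (Icc a b)) :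
    MonotoneOn (arcLength a b f) (Icc a b) := by
  intro x hx y hy hxy
  unfold arcLength
  split_ifs
  · exact le_rfl
  · gcongr
    · linarith [hx.1, hx.2]
    · exact hf.mono (Icc_subset_Icc_right hy.2)
    · exact eVariationOn.mono f (Icc_subset_Icc_right hxy)

theorem arcLength_left : arcLength a b f a = a := by
  unfold arcLength
  split_ifs
  · rfl
  · rw [Icc_self, eVariationOn.subsingleton f subsingleton_singleton]
    simp

theorem arcLength_right (hf : BoundedVariationOn f (Icc a b))
    (hV : eVariationOn f (Icc a b) ≠ 0) : arcLength a b f b = b := by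
  rw [arcLength, if_neg hV, mul_div_cancel_right₀ _ (ENNReal.toReal_ne_zero.2 ⟨hV, hf⟩),
    add_sub_cancel]

theorem mul_arcLength_sub_arcLength (hab : a < b) (hf : BoundedVariationOn f (Icc a b))
    (hV : eVariationOn f (Icc a b) ≠ 0) :
    (eVariationOn f (Icc a b)).toReal / (b - a) * (arcLength a b f y - arcLength a b f x) =
      (eVariationOn f (Icc a y)).toReal - (eVariationOn f (Icc a x)).toReal := by
  have : (eVariationOn f (Icc a b)).toReal ≠ 0 := ENNReal.toReal_ne_zero.2 ⟨hV, hf⟩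
  have : b - a ≠ 0 := sub_ne_zero.2 hab.ne'
  simp only [arcLength, if_neg hV]
  field_simp
  ring

theorem dist_le_mul_arcLength_sub (hab : a < b) (hf : BoundedVariationOn f (Icc a b))
    (hV : eVariationOn f (Icc a b) ≠ 0) (hx : a ≤ x) (hxy : x ≤ y) (hy : y ≤ b) :
    dist (f x) (f y) ≤ ((eVariationOn f (Icc a b)).toReal / (b - a)).toNNReal *
      (arcLength a b f y - arcLength a b f x) := by
  rw [Real.coe_toNNReal _ (div_nonneg ENNReal.toReal_nonneg (sub_nonneg.2 hab.le)),
    mul_arcLength_sub_arcLength hab hf hV, eVariationOn_Icc_toReal_sub hf hx hxy hy]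
  exact (hf.mono (Icc_subset_Icc hx hy)).dist_le (left_mem_Icc.2 hxy) (right_mem_Icc.2 hxy)

theorem continuousWithinAt_arcLength (hf : BoundedVariationOn f (Icc a b)) (ht : t ∈ Ico a b)
    (hrc : ContinuousWithinAt f (Ici t) t) :
    ContinuousWithinAt (arcLength a b f) (Icc t b) t := by
  have := continuousWithinAt_eVariationOn_Icc_toReal hf ht hrc
  unfold arcLength
  split_ifs
  · exact continuousWithinAt_const
  · exact continuousWithinAt_const.add ((this.const_mul _).div_const _)

end ArcLength

section IccExtend

variable {β : Type*} {a b t : ℝ} (hab : a ≤ b) {g : ℝ → β}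

theorem IccExtend_domRestrict_of_mem {x : ℝ} (hx : x ∈ Icc a b) :
    IccExtend hab ((Icc a b).domRestrict g) x = g x :=
  IccExtend_of_mem hab _ hx

theorem leftLim_IccExtend_domRestrict_left [TopologicalSpace β] [T2Space β] :
    (IccExtend hab ((Icc a b).domRestrict g)).leftLim a = g a := by
  refine leftLim_eq_of_tendsto (tendsto_const_nhds.congr' ?_)
  filter_upwards [self_mem_nhdsWithin] with x hx
  exact (IccExtend_of_le_left hab ((Icc a b).domRestrict g) (le_of_lt hx)).symm

theorem tendsto_IccExtend_domRestrict_nhdsLT_iff [TopologicalSpace β] (ht : t ∈ Ioc a b)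
    {l : Filter β} :
    Tendsto (IccExtend hab ((Icc a b).domRestrict g)) (𝓝[<] t) l ↔ Tendsto g (𝓝[<] t) l := by
  refine tendsto_congr' ?_
  filter_upwards [Ioo_mem_nhdsLT ht.1] with x hx
  exact IccExtend_domRestrict_of_mem hab ⟨hx.1.le, hx.2.le.trans ht.2⟩

theorem monotone_IccExtend_domRestrict {g : ℝ → ℝ} (hg : MonotoneOn g (Icc a b)) :
    Monotone (IccExtend hab ((Icc a b).domRestrict g)) :=
  Monotone.IccExtend hab (monotoneOn_iff_monotone.1 hg)

theorem boundedVariationOn_IccExtend_domRestrict {E : Type*} [PseudoEMetricSpace E] {f : ℝ → E}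
    (hf : BoundedVariationOn f (Icc a b)) :
    BoundedVariationOn (IccExtend hab ((Icc a b).domRestrict f)) univ :=
  ne_top_of_le_ne_top hf <| eVariationOn.comp_le_of_monotoneOn f _
    (fun _ _ _ _ hxy => monotone_projIcc hab hxy) fun x _ => (projIcc a b hab x).2

theorem continuousWithinAt_IccExtend_domRestrict [TopologicalSpace β] (ht : t ∈ Ico a b)
    (hg : ContinuousWithinAt g (Icc t b) t) :
    ContinuousWithinAt (IccExtend hab ((Icc a b).domRestrict g)) (Ici t) t := by
  rw [← continuousWithinAt_Icc_iff_Ici ht.2]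
  exact hg.congr (fun x hx => IccExtend_domRestrict_of_mem hab ⟨ht.1.trans hx.1, hx.2⟩)
    (IccExtend_domRestrict_of_mem hab (Ico_subset_Icc_self ht))

theorem dist_IccExtend_domRestrict_le {E : Type*} [PseudoMetricSpace E] {f : ℝ → E}
    {φ : ℝ → ℝ} {κ : ℝ}
    (h : ∀ x ∈ Icc a b, ∀ y ∈ Icc a b, x ≤ y → dist (f x) (f y) ≤ κ * (φ y - φ x))
    {x y : ℝ} (hxy : x ≤ y) :
    dist (IccExtend hab ((Icc a b).domRestrict f) x) (IccExtend hab ((Icc a b).domRestrict f) y) ≤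
      κ * (IccExtend hab ((Icc a b).domRestrict φ) y -
        IccExtend hab ((Icc a b).domRestrict φ) x) := by
  simp only [IccExtend_apply, domRestrict_apply]
  exact h _ (projIcc a b hab x).2 _ (projIcc a b hab y).2 (monotone_projIcc hab hxy)

end IccExtend

section Factor

variable {H : Type*} [NormedAddCommGroup H] [NormedSpace ℝ H]

def IsArcLengthFactor (a b : ℝ) (f g : ℝ → H) : Prop :=
  LipschitzOnWith ((eVariationOn f (Icc a b)).toReal / (b - a)).toNNReal g (Icc a b) ∧
    (∀ t ∈ Icc a b, f t = g (arcLength a b f t)) ∧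
    (∀ t ∈ Icc a b, ∃ fl : H, ∃ ll : ℝ,
      (if t = a then fl = f a ∧ ll = arcLength a b f a
        else Tendsto f (𝓝[Iio t] t) (𝓝 fl) ∧
          Tendsto (arcLength a b f) (𝓝[Iio t] t) (𝓝 ll)) ∧
      ∀ lam ∈ Icc (0:ℝ) 1,
        g (ll * (1 - lam) + arcLength a b f t * lam) = (1 - lam) • fl + lam • f t)

variable {a b : ℝ} {f g : ℝ → H}

theorem isArcLengthFactor_iff [CompleteSpace H] (hab : a ≤ b)
    (hf : BoundedVariationOn f (Icc a b)) :
    IsArcLengthFactor a b f g ↔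
      LipschitzOnWith ((eVariationOn f (Icc a b)).toReal / (b - a)).toNNReal g (Icc a b) ∧
      ∀ t ∈ Icc a b, ∀ c ∈ Icc (0:ℝ) 1,
        g (lineMap ((IccExtend hab ((Icc a b).domRestrict (arcLength a b f))).leftLim t)
            (IccExtend hab ((Icc a b).domRestrict (arcLength a b f)) t) c) =
          lineMap ((IccExtend hab ((Icc a b).domRestrict f)).leftLim t)
            (IccExtend hab ((Icc a b).domRestrict f) t) c := by
  set F := IccExtend hab ((Icc a b).domRestrict f)
  set Φ := IccExtend hab ((Icc a b).domRestrict (arcLength a b f))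
  have hF : ∀ t ∈ Icc a b, F t = f t := fun t => IccExtend_domRestrict_of_mem hab
  have hΦ : ∀ t ∈ Icc a b, Φ t = arcLength a b f t := fun t => IccExtend_domRestrict_of_mem hab
  have hleft : ∀ t ∈ Icc a b, ∀ (fl : H) (ll : ℝ),
      (if t = a then fl = f a ∧ ll = arcLength a b f a
        else Tendsto f (𝓝[Iio t] t) (𝓝 fl) ∧ Tendsto (arcLength a b f) (𝓝[Iio t] t) (𝓝 ll)) ↔
      fl = F.leftLim t ∧ ll = Φ.leftLim t := by
    rintro t ⟨hat, htb⟩ fl ll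
    rcases hat.eq_or_lt with rfl | hat
    · rw [if_pos rfl, leftLim_IccExtend_domRestrict_left, leftLim_IccExtend_domRestrict_left]
    · have hFl := (boundedVariationOn_IccExtend_domRestrict hab hf).tendsto_leftLim t
      have hΦl :=
        (monotone_IccExtend_domRestrict hab (monotoneOn_arcLength hf)).tendsto_leftLim t
      rw [tendsto_IccExtend_domRestrict_nhdsLT_iff hab ⟨hat, htb⟩] at hFl hΦl
      rw [if_neg hat.ne']
      exact ⟨fun h => ⟨tendsto_nhds_unique h.1 hFl, tendsto_nhds_unique h.2 hΦl⟩,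
        fun ⟨h₁, h₂⟩ => ⟨h₁ ▸ hFl, h₂ ▸ hΦl⟩⟩
  have hline : ∀ (ll : ℝ) (t c : ℝ),
      lineMap ll (arcLength a b f t) c = ll * (1 - c) + arcLength a b f t * c := by
    intro ll t c
    rw [lineMap_apply_module, smul_eq_mul, smul_eq_mul]
    ring
  constructor
  · rintro ⟨hL, -, hint⟩
    refine ⟨hL, fun t ht c hc => ?_⟩
    obtain ⟨fl, ll, hcl, hg⟩ := hint t ht
    obtain ⟨rfl, rfl⟩ := (hleft t ht fl ll).1 hcl
    rw [hF t ht, hΦ t ht, hline, lineMap_apply_module]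
    exact hg c hc
  · rintro ⟨hL, hg⟩
    have hg' : ∀ t ∈ Icc a b, ∀ c ∈ Icc (0:ℝ) 1, g (lineMap (Φ.leftLim t) (arcLength a b f t) c) =
        lineMap (F.leftLim t) (f t) c := fun t ht => by
      simpa only [hF t ht, hΦ t ht] using hg t ht
    refine ⟨hL, fun t ht => ?_, fun t ht => ⟨F.leftLim t, Φ.leftLim t,
      (hleft t ht _ _).2 ⟨rfl, rfl⟩, fun c hc => ?_⟩⟩
    · simpa using (hg' t ht 1 ⟨zero_le_one, le_rfl⟩).symm
    · rw [← hline, ← lineMap_apply_module]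
      exact hg' t ht c hc

theorem exists_isArcLengthFactor_of_eVariationOn_eq_zero (hab : a ≤ b)
    (hV : eVariationOn f (Icc a b) = 0) :
    ∃ ft, IsArcLengthFactor a b f ft ∧ ∀ g, IsArcLengthFactor a b f g → EqOn ft g (Icc a b) := by
  have hconst : ∀ t ∈ Icc a b, f t = f a := fun t ht =>
    edist_eq_zero.1 ((eVariationOn.eq_zero_iff f).1 hV t ht a (left_mem_Icc.2 hab))
  have hℓ : arcLength a b f = fun _ => a := funext fun _ => if_pos hV
  have hK : ((eVariationOn f (Icc a b)).toReal / (b - a)).toNNReal = 0 := by simp [hV]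
  refine ⟨fun _ => f a, ⟨?_, hconst, fun t ht => ⟨f a, a, ?_, fun c _ => ?_⟩⟩, ?_⟩
  · rw [hK]
    exact (LipschitzWith.const _).lipschitzOnWith
  · rw [hℓ]
    split_ifs with h
    · exact ⟨rfl, rfl⟩
    · refine ⟨tendsto_const_nhds.congr' ?_, tendsto_const_nhds⟩
      filter_upwards [Ioo_mem_nhdsLT (lt_of_le_of_ne ht.1 (Ne.symm h))] with x hx
      exact (hconst x ⟨hx.1.le, hx.2.le.trans ht.2⟩).symm
  · rw [hconst t ht, ← add_smul, sub_add_cancel, one_smul]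
  · rintro g ⟨hg, hga, -⟩ s hs
    rw [hK] at hg
    have ha := hga a (left_mem_Icc.2 hab)
    rw [hℓ] at ha
    refine ha.trans (dist_le_zero.1 ?_)
    simpa using hg.dist_le_mul a (left_mem_Icc.2 hab) s hs

end Factor

/-- if `f : [a,b] → H` is right continuous of bounded variation, there is a
unique (on `[a,b]`) Lipschitz function `f̃` with constant at most `pV(f,[a,b])/(b-a)` such
that `f = f̃ ∘ ℓ_f` on `[a,b]` and `f̃` interpolates linearly the jumps of `f`:
`f̃(ℓ_f(t−)(1−λ) + ℓ_f(t)λ) = (1−λ) f(t−) + λ f(t)` (with the convention `f(a−) = f(a)`,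
`ℓ_f(a−) = ℓ_f(a)`). -/
theorem stmt7 {H : Type*} [NormedAddCommGroup H] [InnerProductSpace ℝ H] [CompleteSpace H]
    (a b : ℝ) (hab : a < b) (f : ℝ → H)
    (hBV : eVariationOn f (Icc a b) ≠ ⊤)
    (hrc : ∀ t ∈ Ico a b, ContinuousWithinAt f (Ici t) t) :
    ∃ ft : ℝ → H,
      (LipschitzOnWith ((eVariationOn f (Icc a b)).toReal / (b - a)).toNNReal ft (Icc a b) ∧
        (∀ t ∈ Icc a b, f t = ft (arcLength a b f t)) ∧
        (∀ t ∈ Icc a b, ∃ fl : H, ∃ ll : ℝ,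
          (if t = a then fl = f a ∧ ll = arcLength a b f a
            else Tendsto f (𝓝[Iio t] t) (𝓝 fl) ∧
              Tendsto (arcLength a b f) (𝓝[Iio t] t) (𝓝 ll)) ∧
          ∀ lam ∈ Icc (0:ℝ) 1,
            ft (ll * (1 - lam) + arcLength a b f t * lam) = (1 - lam) • fl + lam • f t)) ∧
      ∀ g : ℝ → H,
        (LipschitzOnWith ((eVariationOn f (Icc a b)).toReal / (b - a)).toNNReal g (Icc a b) ∧
          (∀ t ∈ Icc a b, f t = g (arcLength a b f t)) ∧
          (∀ t ∈ Icc a b, ∃ fl : H, ∃ ll : ℝ,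
            (if t = a then fl = f a ∧ ll = arcLength a b f a
              else Tendsto f (𝓝[Iio t] t) (𝓝 fl) ∧
                Tendsto (arcLength a b f) (𝓝[Iio t] t) (𝓝 ll)) ∧
            ∀ lam ∈ Icc (0:ℝ) 1,
              g (ll * (1 - lam) + arcLength a b f t * lam) = (1 - lam) • fl + lam • f t)) →
        EqOn ft g (Icc a b) := by
  show ∃ ft, IsArcLengthFactor a b f ft ∧ ∀ g, IsArcLengthFactor a b f g → EqOn ft g (Icc a b)
  by_cases hV : eVariationOn f (Icc a b) = 0
  · exact exists_isArcLengthFactor_of_eVariationOn_eq_zero hab.le hV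
  set F := IccExtend hab.le ((Icc a b).domRestrict f)
  set Φ := IccExtend hab.le ((Icc a b).domRestrict (arcLength a b f))
  have hΦ : Monotone Φ := monotone_IccExtend_domRestrict hab.le (monotoneOn_arcLength hBV)
  have hF : ∀ t, Tendsto F (𝓝[<] t) (𝓝 (F.leftLim t)) :=
    (boundedVariationOn_IccExtend_domRestrict hab.le hBV).tendsto_leftLim
  have hFΦ : ∀ x y, x ≤ y → dist (F x) (F y) ≤
      ((eVariationOn f (Icc a b)).toReal / (b - a)).toNNReal * (Φ y - Φ x) := fun x y =>
    dist_IccExtend_domRestrict_le hab.le fun x hx y hy hxy =>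
      dist_le_mul_arcLength_sub hab hBV hV hx.1 hxy hy.2
  have hjump t := dist_leftLim_apply_le hΦ (hF t) hFΦ
  have hcross x y (hxy : x < y) := dist_apply_leftLim_le hΦ hxy (hF y) hFΦ
  have hΦa : Φ a = a :=
    (IccExtend_domRestrict_of_mem hab.le (left_mem_Icc.2 hab.le)).trans arcLength_left
  have hΦb : Φ b = b :=
    (IccExtend_domRestrict_of_mem hab.le (right_mem_Icc.2 hab.le)).trans (arcLength_right hBV hV)
  have hcover : Icc a b ⊆ ⋃ t ∈ Icc a b, Icc (Φ.leftLim t) (Φ t) := by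
    simpa only [hΦa, hΦb] using Icc_subset_biUnion_Icc_leftLim hΦ hab.le fun t ht =>
      continuousWithinAt_IccExtend_domRestrict hab.le ht
        (continuousWithinAt_arcLength hBV ht (hrc t ht))
  simp_rw [isArcLengthFactor_iff hab.le hBV]
  exact ⟨jumpFill F Φ, ⟨lipschitzOnWith_jumpFill hjump hcross hcover,
    fun t _ c hc => jumpFill_lineMap hΦ hjump hcross hc⟩,
    fun g hg => eqOn_jumpFill hjump hcross hcover hg.2⟩
end

section
/- (Integral characterization of the sweeping differential inclusion.) Let H be a real Hilbert space, a < b, μ a positive finite Borel measure on [a,b), B a Borel subset of [a,b) with μ(B) ≠ 0, C : [a,b) → Conv_H right continuous of bounded variation (w.r.t. the Hausdorff distance), v ∈ L¹(μ; H), and y : [a,b) → H right continuous with bounded variation satisfying y(t) ∈ C(t) for all t. Then the following are equivalent: (i) −v(t) ∈ N_{C(t)}(y(t)) for μ-a.e. t ∈ B; (ii) ∫_B ⟨y(t) − z(t), v(t)⟩ dμ(t) ≤ 0 for every μ-measurable selection z : [a,b) → H with z(t) ∈ C(t) for all t ∈ B. -/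
/-!
(i) ⇒ (ii) is pointwise. For (ii) ⇒ (i) test (ii) with `z = y + θ (P - y)`, where `P t` is the
nearest point of `C t` to `y t - v t` and `θ > 0` is a damping factor: then
`⟪y - z, v⟫ = θ ⟪y - P, v⟫ ≥ θ ‖y - P‖²`, so (ii) forces `y = P` a.e., which is (i).
The real work is the measurability of `P`. For fixed `x`, `t ↦ proj_{C t} (y t - x)` is right
continuous, since the projection depends continuously on the set in the Hausdorff distance,
and right-continuous functions are measurable; as the projection is 1-Lipschitz in the point,
a Carathéodory argument then lets `x = v t` vary measurably.
-/

open Set Filter Topology MeasureTheory TopologicalSpace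
open scoped RealInnerProductSpace ENNReal

/-- The exterior normal cone of the convex set `K` at `x`. -/
def normalCone {H : Type*} [NormedAddCommGroup H] [InnerProductSpace ℝ H]
    (K : Set H) (x : H) : Set H :=
  {u | ∀ v ∈ K, ⟪u, v - x⟫ ≤ 0}

section ConvexProjection

variable {H : Type*} [NormedAddCommGroup H] [InnerProductSpace ℝ H] {K K' : Set H}

/-- The nearest-point projection onto `K`, through its variational characterization; it is a
junk value unless `K` is nonempty, complete and convex. -/
noncomputable def projConvex (K : Set H) (x : H) : H :=
  Classical.epsilon fun p => p ∈ K ∧ ∀ w ∈ K, ⟪x - p, w - p⟫ ≤ 0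

theorem projConvex_spec (hne : K.Nonempty) (hK : IsComplete K) (hconv : Convex ℝ K) (x : H) :
    projConvex K x ∈ K ∧ ∀ w ∈ K, ⟪x - projConvex K x, w - projConvex K x⟫ ≤ 0 := by
  refine Classical.epsilon_spec (p := fun p => p ∈ K ∧ ∀ w ∈ K, ⟪x - p, w - p⟫ ≤ 0) ?_
  obtain ⟨p, hp, hmin⟩ := exists_norm_eq_iInf_of_complete_convex hne hK hconv x
  exact ⟨p, hp, (norm_eq_iInf_iff_real_inner_le_zero hconv hp).1 hmin⟩

theorem projConvex_mem (hne : K.Nonempty) (hK : IsComplete K) (hconv : Convex ℝ K) (x : H) :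
    projConvex K x ∈ K :=
  (projConvex_spec hne hK hconv x).1

theorem inner_sub_projConvex_nonpos (hne : K.Nonempty) (hK : IsComplete K)
    (hconv : Convex ℝ K) (x : H) {w : H} (hw : w ∈ K) :
    ⟪x - projConvex K x, w - projConvex K x⟫ ≤ 0 :=
  (projConvex_spec hne hK hconv x).2 w hw

theorem norm_sub_projConvex_le (hne : K.Nonempty) (hK : IsComplete K) (hconv : Convex ℝ K)
    (x : H) {w : H} (hw : w ∈ K) : ‖x - projConvex K x‖ ≤ ‖x - w‖ := by
  have hmin := (norm_eq_iInf_iff_real_inner_le_zero hconv (projConvex_mem hne hK hconv x)).2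
    fun w hw => inner_sub_projConvex_nonpos hne hK hconv x hw
  rw [hmin]
  exact ciInf_le ⟨0, forall_mem_range.2 fun _ => norm_nonneg _⟩ (⟨w, hw⟩ : K)

theorem inner_sub_projConvex_le (hne : K.Nonempty) (hK : IsComplete K) (hconv : Convex ℝ K)
    (x w : H) {q : H} (hq : q ∈ K) :
    ⟪x - projConvex K x, w - projConvex K x⟫ ≤ ‖x - projConvex K x‖ * ‖w - q‖ := by
  have hsplit : w - projConvex K x = (q - projConvex K x) + (w - q) := by abel
  rw [hsplit, inner_add_right]
  linarith [inner_sub_projConvex_nonpos hne hK hconv x hq,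
    real_inner_le_norm (x - projConvex K x) (w - q)]

theorem lipschitzWith_projConvex (hne : K.Nonempty) (hK : IsComplete K) (hconv : Convex ℝ K) :
    LipschitzWith 1 (projConvex K) := by
  refine LipschitzWith.mk_one fun x x' => ?_
  set p := projConvex K x
  set p' := projConvex K x'
  have h := inner_sub_projConvex_nonpos hne hK hconv x (projConvex_mem hne hK hconv x')
  have h' := inner_sub_projConvex_nonpos hne hK hconv x' (projConvex_mem hne hK hconv x)
  have hsum : ⟪x - p, p' - p⟫ + ⟪x' - p', p - p'⟫ = ‖p - p'‖ ^ 2 - ⟪x - x', p - p'⟫ := by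
    rw [← neg_sub p p', inner_neg_right, neg_add_eq_sub, ← inner_sub_left,
      ← real_inner_self_eq_norm_sq, ← inner_sub_left]
    congr 1
    abel
  rw [dist_eq_norm, dist_eq_norm]
  nlinarith [real_inner_le_norm (x - x') (p - p'), norm_nonneg (p - p'), norm_nonneg (x - x')]

theorem sq_norm_projConvex_sub_le (hne : K.Nonempty) (hK : IsComplete K) (hconv : Convex ℝ K)
    (hne' : K'.Nonempty) (hK' : IsComplete K') (hconv' : Convex ℝ K') (x : H) {η : ℝ}
    (hd : Metric.hausdorffEDist K K' < ENNReal.ofReal η) :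
    ‖projConvex K x - projConvex K' x‖ ^ 2 ≤ (2 * ‖x - projConvex K x‖ + η) * η := by
  set p := projConvex K x
  set p' := projConvex K' x
  obtain ⟨q', hq', hpq'⟩ :=
    Metric.exists_edist_lt_of_hausdorffEDist_lt (projConvex_mem hne hK hconv x) hd
  obtain ⟨q, hq, hp'q⟩ := Metric.exists_edist_lt_of_hausdorffEDist_lt
    (projConvex_mem hne' hK' hconv' x) (Metric.hausdorffEDist_comm.trans_lt hd)
  rw [edist_lt_ofReal, dist_eq_norm] at hpq' hp'q
  have hp'_near : ‖x - p'‖ ≤ ‖x - p‖ + η := by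
    have hmin := norm_sub_projConvex_le hne' hK' hconv' x hq'
    have htri : ‖x - q'‖ ≤ ‖x - p‖ + ‖p - q'‖ := by
      simpa using norm_add_le (x - p) (p - q')
    linarith
  have h := inner_sub_projConvex_le hne hK hconv x p' hq
  have h' := inner_sub_projConvex_le hne' hK' hconv' x p hq'
  have hsq : ‖p - p'‖ ^ 2 = ⟪x - p, p' - p⟫ + ⟪x - p', p - p'⟫ := by
    rw [← neg_sub p p', inner_neg_right, ← sub_eq_neg_add, ← inner_sub_left,
      sub_sub_sub_cancel_left, real_inner_self_eq_norm_sq]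
  have hη : 0 ≤ η := by
    by_contra! hη
    simp [ENNReal.ofReal_of_nonpos hη.le] at hd
  nlinarith [norm_nonneg (x - p), norm_nonneg (x - p')]

theorem tendsto_projConvex {ι : Type*} {l : Filter ι} {K : ι → Set H} {K₀ : Set H}
    (hK : ∀ᶠ i in l, (K i).Nonempty ∧ IsComplete (K i) ∧ Convex ℝ (K i))
    (hne₀ : K₀.Nonempty) (hK₀ : IsComplete K₀) (hconv₀ : Convex ℝ K₀)
    (hd : Tendsto (fun i => Metric.hausdorffEDist (K i) K₀) l (𝓝 0))
    {x : ι → H} {x₀ : H} (hx : Tendsto x l (𝓝 x₀)) :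
    Tendsto (fun i => projConvex (K i) (x i)) l (𝓝 (projConvex K₀ x₀)) := by
  have hfixed : Tendsto (fun i => projConvex (K i) x₀) l (𝓝 (projConvex K₀ x₀)) := by
    rw [Metric.tendsto_nhds]
    intro ε hε
    set D := ‖x₀ - projConvex K₀ x₀‖
    have hbound : Tendsto (fun η : ℝ => (2 * D + η) * η) (𝓝[>] 0) (𝓝 0) :=
      (((continuous_const.add continuous_id).mul continuous_id).tendsto' 0 0
        (by simp)).mono_left nhdsWithin_le_nhds
    obtain ⟨η, hηε, hη⟩ :=
      ((hbound.eventually (gt_mem_nhds (pow_pos hε 2))).and self_mem_nhdsWithin).exists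
    filter_upwards [hK, hd.eventually (gt_mem_nhds (ENNReal.ofReal_pos.2 hη))]
      with i ⟨hne, hKi, hconv⟩ hdi
    have hsq := sq_norm_projConvex_sub_le hne₀ hK₀ hconv₀ hne hKi hconv x₀
      (Metric.hausdorffEDist_comm.trans_lt hdi)
    rw [dist_comm, dist_eq_norm]
    exact lt_of_pow_lt_pow_left₀ 2 hε.le (hsq.trans_lt hηε)
  have hmoving : Tendsto (fun i => projConvex (K i) (x i) - projConvex (K i) x₀) l (𝓝 0) := by
    refine squeeze_zero_norm' ?_ (tendsto_iff_norm_sub_tendsto_zero.1 hx)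
    filter_upwards [hK] with i ⟨hne, hKi, hconv⟩
    simpa using (lipschitzWith_projConvex hne hKi hconv).norm_sub_le (x i) x₀
  simpa using hmoving.add hfixed

end ConvexProjection

section NormalCone

variable {H : Type*} [NormedAddCommGroup H] [InnerProductSpace ℝ H] {K : Set H}

theorem inner_sub_nonpos_of_neg_mem_normalCone {y z v : H} (hv : -v ∈ normalCone K y)
    (hz : z ∈ K) : ⟪y - z, v⟫ ≤ 0 := by
  have h := hv z hz
  rwa [← neg_sub y z, inner_neg_neg, real_inner_comm] at h

theorem sq_norm_sub_projConvex_le_inner (hne : K.Nonempty) (hK : IsComplete K)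
    (hconv : Convex ℝ K) {y : H} (hy : y ∈ K) (v : H) :
    ‖y - projConvex K (y - v)‖ ^ 2 ≤ ⟪y - projConvex K (y - v), v⟫ := by
  have h := inner_sub_projConvex_nonpos hne hK hconv (y - v) hy
  rw [sub_right_comm, inner_sub_left, real_inner_self_eq_norm_sq, real_inner_comm] at h
  linarith

theorem neg_mem_normalCone_of_inner_sub_projConvex_nonpos (hne : K.Nonempty)
    (hK : IsComplete K) (hconv : Convex ℝ K) {y v : H} (hy : y ∈ K)
    (h : ⟪y - projConvex K (y - v), v⟫ ≤ 0) : -v ∈ normalCone K y := by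
  have hfix : projConvex K (y - v) = y := by
    set p := projConvex K (y - v)
    have hsq := (sq_norm_sub_projConvex_le_inner hne hK hconv hy v).trans h
    have hzero : ‖y - p‖ = 0 := by nlinarith [norm_nonneg (y - p)]
    exact (norm_sub_eq_zero_iff.1 hzero).symm
  intro w hw
  simpa [hfix] using inner_sub_projConvex_nonpos hne hK hconv (y - v) hw

end NormalCone

theorem MeasureTheory.AEStronglyMeasurable.caratheodory {α E F : Type*} [MeasurableSpace α]
    {μ : Measure α} [TopologicalSpace E] [TopologicalSpace F] [PseudoMetrizableSpace F]
    {f : α → E} {g : α → E → F} (hf : AEStronglyMeasurable f μ)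
    (hg : ∀ x, AEStronglyMeasurable (fun t => g t x) μ) (hcont : ∀ᵐ t ∂μ, Continuous (g t)) :
    AEStronglyMeasurable (fun t => g t (f t)) μ := by
  obtain ⟨f', hf', hff'⟩ := hf
  have hsimple : ∀ n, AEStronglyMeasurable (fun t => g t (hf'.approx n t)) μ := by
    intro n
    set s := hf'.approx n
    have hcover : (⋃ c : s.range, s ⁻¹' {(c : E)}) = univ :=
      iUnion_eq_univ_iff.2 fun t => ⟨⟨s t, s.mem_range_self t⟩, rfl⟩
    rw [← Measure.restrict_univ (μ := μ), ← hcover, aestronglyMeasurable_iUnion_iff]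
    rintro ⟨c, -⟩
    refine (hg c).restrict.congr ?_
    filter_upwards [ae_restrict_mem (s.measurableSet_fiber c)] with t ht
    rw [ht]
  refine aestronglyMeasurable_of_tendsto_ae atTop hsimple ?_
  filter_upwards [hcont, hff'] with t hgt hft
  rw [hft]
  exact (hgt.tendsto _).comp (hf'.tendsto_approx t)

/-- `f` is the pointwise limit on `s` of `f` composed with rounding up to the grid
`(n + 1)⁻¹ ℤ`, and each of these factors through `ℤ`. -/
theorem aestronglyMeasurable_restrict_of_continuousWithinAt_Ici {E : Type*}
    [TopologicalSpace E] [PseudoMetrizableSpace E] {f : ℝ → E} {s : Set ℝ}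
    (hs : MeasurableSet s) (hf : ∀ t ∈ s, ContinuousWithinAt f (Ici t) t) (μ : Measure ℝ) :
    AEStronglyMeasurable f (μ.restrict s) := by
  set r : ℕ → ℝ → ℝ := fun n t => (⌊t * (n + 1)⌋ + 1) / (n + 1)
  have hr_sm : ∀ n, StronglyMeasurable fun t => f (r n t) := fun n =>
    (StronglyMeasurable.of_discrete (f := fun k : ℤ => f ((k + 1) / (n + 1)))).comp_measurable
      (measurable_id.mul_const _).floor
  have hr_bounds : ∀ n t, t < r n t ∧ r n t ≤ t + 1 / (n + 1) := by
    intro n t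
    have hn : (0 : ℝ) < n + 1 := by positivity
    simp only [r, lt_div_iff₀ hn, div_le_iff₀ hn, add_mul, one_div_mul_cancel hn.ne']
    exact ⟨Int.lt_floor_add_one _, by linarith [Int.floor_le (t * (n + 1))]⟩
  refine aestronglyMeasurable_of_tendsto_ae atTop (fun n => (hr_sm n).aestronglyMeasurable)
    (ae_restrict_of_forall_mem hs fun t ht => (hf t ht).tendsto.comp ?_)
  refine tendsto_nhdsWithin_iff.2 ⟨?_, Eventually.of_forall fun n => (hr_bounds n t).1.le⟩
  have hlim : Tendsto (fun n : ℕ => t + 1 / ((n : ℝ) + 1)) atTop (𝓝 t) := by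
    simpa using tendsto_const_nhds.add (tendsto_one_div_add_atTop_nhds_zero_nat (𝕜 := ℝ))
  exact tendsto_of_tendsto_of_tendsto_of_le_of_le tendsto_const_nhds hlim
    (fun n => (hr_bounds n t).1.le) fun n => (hr_bounds n t).2

section Selection

variable {α H : Type*} [MeasurableSpace α] [NormedAddCommGroup H] [InnerProductSpace ℝ H]

/-- The test selection is `y + θ (P - y)` with `P` the projection of `y - v` and the damping
`θ = (1 + ‖y - P‖)⁻¹`, which keeps `‖y - z‖ ≤ 1`, hence the integrand dominated by `‖v‖`. -/
theorem ae_neg_mem_normalCone_of_forall_setIntegral_nonpos {μ : Measure α} {B : Set α}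
    (hB : MeasurableSet B) {K : α → Set H}
    (hK : ∀ t ∈ B, (K t).Nonempty ∧ IsComplete (K t) ∧ Convex ℝ (K t))
    {y v : α → H} (hyK : ∀ t ∈ B, y t ∈ K t) (hy : AEStronglyMeasurable y (μ.restrict B))
    (hv : IntegrableOn v B μ)
    (hP : AEStronglyMeasurable (fun t => projConvex (K t) (y t - v t)) (μ.restrict B))
    (h : ∀ z : α → H, AEStronglyMeasurable z μ → (∀ t ∈ B, z t ∈ K t) →
      Integrable (fun t => ⟪y t - z t, v t⟫) (μ.restrict B) →
      ∫ t in B, ⟪y t - z t, v t⟫ ∂μ ≤ 0) :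
    ∀ᵐ t ∂μ, t ∈ B → -v t ∈ normalCone (K t) (y t) := by
  set P := fun t => projConvex (K t) (y t - v t)
  set θ : α → ℝ := fun t => (1 + ‖y t - P t‖)⁻¹
  set z := B.indicator fun t => y t + θ t • (P t - y t)
  have hθ_pos : ∀ t, 0 < θ t := fun t => inv_pos.2 (by positivity)
  have hθ_le : ∀ t, θ t * ‖y t - P t‖ ≤ 1 := fun t => by
    rw [inv_mul_le_one₀ (by positivity)]
    linarith
  have hyz : ∀ t ∈ B, y t - z t = θ t • (y t - P t) := fun t ht => by
    simp only [z, indicator_of_mem ht, smul_sub]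
    abel
  have hzK : ∀ t ∈ B, z t ∈ K t := fun t ht => by
    obtain ⟨hne, hKt, hconv⟩ := hK t ht
    simp only [z, indicator_of_mem ht]
    exact hconv.add_smul_sub_mem (hyK t ht) (projConvex_mem hne hKt hconv _)
      ⟨(hθ_pos t).le, inv_le_one_of_one_le₀ (by simp)⟩
  have hintegrand : ∀ t ∈ B, ⟪y t - z t, v t⟫ = θ t * ⟪y t - P t, v t⟫ := fun t ht => by
    rw [hyz t ht, real_inner_smul_left]
  have hnonneg : ∀ t ∈ B, 0 ≤ ⟪y t - P t, v t⟫ := fun t ht => by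
    obtain ⟨hne, hKt, hconv⟩ := hK t ht
    exact (sq_nonneg _).trans (sq_norm_sub_projConvex_le_inner hne hKt hconv (hyK t ht) (v t))
  have hz : AEStronglyMeasurable z μ := by
    have hcont : Continuous fun x : H => (1 + ‖x‖)⁻¹ :=
      (continuous_const.add continuous_norm).inv₀ fun x =>
        (add_pos_of_pos_of_nonneg one_pos (norm_nonneg x)).ne'
    have hθ : AEStronglyMeasurable θ (μ.restrict B) := hcont.comp_aestronglyMeasurable (hy.sub hP)
    exact (aestronglyMeasurable_indicator_iff hB).2 (hy.add (hθ.smul (hP.sub hy)))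
  have hint : Integrable (fun t => ⟪y t - z t, v t⟫) (μ.restrict B) := by
    refine hv.norm.mono' ((hy.sub hz.restrict).inner hv.1) ?_
    refine ae_restrict_of_forall_mem hB fun t ht => ?_
    rw [Real.norm_eq_abs, hintegrand t ht, abs_mul, abs_of_pos (hθ_pos t)]
    calc θ t * |⟪y t - P t, v t⟫| ≤ θ t * (‖y t - P t‖ * ‖v t‖) :=
          mul_le_mul_of_nonneg_left (abs_real_inner_le_norm _ _) (hθ_pos t).le
      _ ≤ ‖v t‖ := by rw [← mul_assoc]; exact mul_le_of_le_one_left (norm_nonneg _) (hθ_le t)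
  have hnonneg_ae : 0 ≤ᵐ[μ.restrict B] fun t => ⟪y t - z t, v t⟫ :=
    ae_restrict_of_forall_mem hB fun t ht => by
      show 0 ≤ ⟪y t - z t, v t⟫
      rw [hintegrand t ht]
      exact mul_nonneg (hθ_pos t).le (hnonneg t ht)
  have hzero : (fun t => ⟪y t - z t, v t⟫) =ᵐ[μ.restrict B] 0 :=
    (integral_eq_zero_iff_of_nonneg_ae hnonneg_ae hint).1
      ((h z hz hzK hint).antisymm (integral_nonneg_of_ae hnonneg_ae))
  rw [← ae_restrict_iff' hB]
  filter_upwards [hzero, ae_restrict_mem hB] with t ht htB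
  obtain ⟨hne, hKt, hconv⟩ := hK t htB
  refine neg_mem_normalCone_of_inner_sub_projConvex_nonpos hne hKt hconv (hyK t htB) ?_
  rw [Pi.zero_apply, hintegrand t htB] at ht
  exact ((mul_eq_zero.1 ht).resolve_left (hθ_pos t).ne').le

end Selection

section Sweeping

variable {H : Type*} [NormedAddCommGroup H] [InnerProductSpace ℝ H] {C : ℝ → Closeds H}
  {a b : ℝ}

theorem continuousWithinAt_projConvex_Ici
    (hC : ∀ t ∈ Ico a b, (C t : Set H).Nonempty ∧ IsComplete (C t : Set H) ∧ Convex ℝ (C t : Set H))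
    {y : ℝ → H} {t : ℝ} (ht : t ∈ Ico a b) (hCt : ContinuousWithinAt C (Ici t) t)
    (hyt : ContinuousWithinAt y (Ici t) t) :
    ContinuousWithinAt (fun s => projConvex (C s : Set H) (y s)) (Ici t) t := by
  obtain ⟨hne, hcomplete, hconv⟩ := hC t ht
  refine tendsto_projConvex ?_ hne hcomplete hconv ?_ hyt
  · filter_upwards [Ico_mem_nhdsGE ht.2] with s hs
    exact hC s ⟨ht.1.trans hs.1, hs.2⟩
  · simpa only [Closeds.edist_eq] using tendsto_iff_edist_tendsto_0.1 hCt

theorem aestronglyMeasurable_projConvex_sub {μ : Measure ℝ}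
    (hC : ∀ t ∈ Ico a b, (C t : Set H).Nonempty ∧ IsComplete (C t : Set H) ∧ Convex ℝ (C t : Set H))
    (hCrc : ∀ t ∈ Ico a b, ContinuousWithinAt C (Ici t) t) {y v : ℝ → H}
    (hyrc : ∀ t ∈ Ico a b, ContinuousWithinAt y (Ici t) t)
    (hv : AEStronglyMeasurable v (μ.restrict (Ico a b))) :
    AEStronglyMeasurable (fun t => projConvex (C t : Set H) (y t - v t))
      (μ.restrict (Ico a b)) := by
  refine hv.caratheodory (g := fun t x => projConvex (C t : Set H) (y t - x)) (fun x => ?_)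
    (ae_restrict_of_forall_mem measurableSet_Ico fun t ht => ?_)
  · exact aestronglyMeasurable_restrict_of_continuousWithinAt_Ici measurableSet_Ico
      (fun t ht => continuousWithinAt_projConvex_Ici hC ht (hCrc t ht)
        ((hyrc t ht).sub continuousWithinAt_const)) μ
  · obtain ⟨hne, hcomplete, hconv⟩ := hC t ht
    exact (lipschitzWith_projConvex hne hcomplete hconv).continuous.comp
      (continuous_const.sub continuous_id)

end Sweeping

theorem stmt10_general {H : Type*} [NormedAddCommGroup H] [InnerProductSpace ℝ H] [CompleteSpace H]
    (a b : ℝ)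
    (μ : Measure ℝ)
    (B : Set ℝ) (hBmeas : MeasurableSet B) (hBsub : B ⊆ Ico a b)
    (C : ℝ → Closeds H)
    (hCconv : ∀ t ∈ Ico a b, Convex ℝ (C t : Set H))
    (hCne : ∀ t ∈ Ico a b, (C t : Set H).Nonempty)
    (hCrc : ∀ t ∈ Ico a b, ContinuousWithinAt C (Ici t) t)
    (v : ℝ → H) (hv : Integrable v μ)
    (y : ℝ → H)
    (hyrc : ∀ t ∈ Ico a b, ContinuousWithinAt y (Ici t) t)
    (hyC : ∀ t ∈ Ico a b, y t ∈ (C t : Set H)) :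
    (∀ᵐ t ∂μ, t ∈ B → -v t ∈ normalCone (C t : Set H) (y t)) ↔
      (∀ z : ℝ → H, AEStronglyMeasurable z μ → (∀ t ∈ B, z t ∈ (C t : Set H)) →
        Integrable (fun t => ⟪y t - z t, v t⟫) (μ.restrict B) →
        ∫ t in B, ⟪y t - z t, v t⟫ ∂μ ≤ 0) := by
  have hC : ∀ t ∈ Ico a b,
      (C t : Set H).Nonempty ∧ IsComplete (C t : Set H) ∧ Convex ℝ (C t : Set H) :=
    fun t ht => ⟨hCne t ht, (C t).isClosed.isComplete, hCconv t ht⟩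
  have hBI : μ.restrict B ≤ μ.restrict (Ico a b) := Measure.restrict_mono hBsub le_rfl
  refine ⟨fun hN z _ hzC _ => setIntegral_nonpos_ae hBmeas ?_, fun h => ?_⟩
  · filter_upwards [hN] with t hNt htB
    exact inner_sub_nonpos_of_neg_mem_normalCone (hNt htB) (hzC t htB)
  · have hy := aestronglyMeasurable_restrict_of_continuousWithinAt_Ici measurableSet_Ico hyrc μ
    have hP := aestronglyMeasurable_projConvex_sub hC hCrc hyrc hv.1.restrict
    exact ae_neg_mem_normalCone_of_forall_setIntegral_nonpos hBmeas (fun t ht => hC t (hBsub ht))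
      (fun t ht => hyC t (hBsub ht)) (hy.mono_measure hBI) hv.integrableOn
      (hP.mono_measure hBI) h

/-- integral characterization of the sweeping differential inclusion.
Here `C : [a,b) → Conv_H` is right continuous of bounded variation in the Hausdorff
distance (encoded via `Closeds H`), `μ` is a positive finite Borel measure, `B ⊆ [a,b)`
is Borel with `μ(B) ≠ 0`, `v ∈ L¹(μ;H)`, and `y` is right continuous of bounded variation
with `y(t) ∈ C(t)` for all `t`. Then `−v(t) ∈ N_{C(t)}(y(t))` for `μ`-a.e. `t ∈ B` iff
`∫_B ⟪y − z, v⟫ dμ ≤ 0` for every `μ`-measurable selection `z` of `C` on `B` (for which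
the integrand is integrable). -/
theorem stmt10 {H : Type*} [NormedAddCommGroup H] [InnerProductSpace ℝ H] [CompleteSpace H]
    (a b : ℝ) (hab : a < b)
    (μ : Measure ℝ) [IsFiniteMeasure μ]
    (B : Set ℝ) (hBmeas : MeasurableSet B) (hBsub : B ⊆ Ico a b) (hBpos : μ B ≠ 0)
    (C : ℝ → Closeds H)
    (hCconv : ∀ t ∈ Ico a b, Convex ℝ (C t : Set H))
    (hCne : ∀ t ∈ Ico a b, (C t : Set H).Nonempty)
    (hCrc : ∀ t ∈ Ico a b, ContinuousWithinAt C (Ici t) t)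
    (hCBV : eVariationOn C (Ico a b) ≠ ⊤)
    (v : ℝ → H) (hv : Integrable v μ)
    (y : ℝ → H)
    (hyrc : ∀ t ∈ Ico a b, ContinuousWithinAt y (Ici t) t)
    (hyBV : eVariationOn y (Ico a b) ≠ ⊤)
    (hyC : ∀ t ∈ Ico a b, y t ∈ (C t : Set H)) :
    (∀ᵐ t ∂μ, t ∈ B → -v t ∈ normalCone (C t : Set H) (y t)) ↔
      (∀ z : ℝ → H, AEStronglyMeasurable z μ → (∀ t ∈ B, z t ∈ (C t : Set H)) →
        Integrable (fun t => ⟪y t - z t, v t⟫) (μ.restrict B) →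
        ∫ t in B, ⟪y t - z t, v t⟫ ∂μ ≤ 0) :=
  stmt10_general a b μ B hBmeas hBsub C hCconv hCne hCrc v hv y hyrc hyC
end

section
/- (Contraction property for sweeping processes.) Let H be a real Hilbert space, a < b, C : [a,b) → Conv_H right continuous of bounded variation, and let y₁, y₂ be solutions of the sweeping process driven by C with initial conditions y_{0,1}, y_{0,2} ∈ C(a) respectively. Then t ↦ ‖y₁(t) − y₂(t)‖² is nonincreasing on [a,b). -/
open Set Filter Topology MeasureTheory TopologicalSpace
open scoped RealInnerProductSpace ENNReal

/-- `y` is a solution on `[a,b)` of the sweeping process driven by `C` with initial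
condition `y₀`. -/
def SweepingSolution {H : Type*} [NormedAddCommGroup H] [InnerProductSpace ℝ H]
    (a b : ℝ) (C : ℝ → Closeds H) (y₀ : H) (y : ℝ → H) : Prop :=
  (∀ t ∈ Ico a b, ContinuousWithinAt y (Ici t) t) ∧
  eVariationOn y (Ico a b) ≠ ⊤ ∧
  ∃ μ : Measure ℝ, IsFiniteMeasure μ ∧ ∃ v : ℝ → H,
    Integrable v μ ∧
    (∀ t ∈ Ico a b, y t ∈ (C t : Set H)) ∧
    (∀ c d : ℝ, a ≤ c → c ≤ d → d < b → y d - y c = ∫ t in Ioc c d, v t ∂μ) ∧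
    (∀ᵐ t ∂μ, t ∈ Ioo a b → -v t ∈ normalCone (C t : Set H) (y t)) ∧
    y a = y₀

/-! Put `z = y₁ - y₂` and fix `s < t`. Summing `‖u‖² - ‖w‖² ≤ 2⟪u, u - w⟫` over a uniform
partition of `[s, t]` and writing each increment of `z` through the two measures bounds
`‖z t‖² - ‖z s‖²` by `2 (∫ ⟪z ∘ τₙ, v₁⟫ dμ₁ - ∫ ⟪z ∘ τₙ, v₂⟫ dμ₂)`, where `τₙ` rounds up to the
partition. Rounding *up* makes `z ∘ τₙ → z` pointwise by right continuity alone, and `z` is bounded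
since it has bounded variation, so dominated convergence replaces `z ∘ τₙ` by `z`. Finally
`⟪y₁ - y₂, v₁⟫ ≤ 0 ≤ ⟪y₁ - y₂, v₂⟫`, because `-vᵢ` is normal to `C` at `yᵢ` and the other
solution lies in `C`. -/

section Grid

noncomputable def gridCeil (s h r : ℝ) : ℝ := s + ⌈(r - s) / h⌉ * h

variable {s h : ℝ}

lemma le_gridCeil (hh : 0 < h) (r : ℝ) : r ≤ gridCeil s h r := by
  have := Int.le_ceil ((r - s) / h)
  rw [div_le_iff₀ hh] at this
  unfold gridCeil
  linarith

lemma gridCeil_lt_add (hh : 0 < h) (r : ℝ) : gridCeil s h r < r + h := by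
  have := mul_lt_mul_of_pos_right (Int.ceil_lt_add_one ((r - s) / h)) hh
  rw [add_mul, div_mul_cancel₀ _ hh.ne', one_mul] at this
  unfold gridCeil
  linarith

lemma gridCeil_le_of_le (hh : 0 < h) {r : ℝ} {m : ℤ} (hr : r ≤ s + m * h) :
    gridCeil s h r ≤ s + m * h := by
  have : ⌈(r - s) / h⌉ ≤ m := Int.ceil_le.2 (by rw [div_le_iff₀ hh]; linarith)
  unfold gridCeil
  gcongr

lemma gridCeil_eq_of_mem_Ioc (hh : 0 < h) {r : ℝ} {k : ℤ}
    (hr : r ∈ Ioc (s + k * h) (s + (k + 1) * h)) : gridCeil s h r = s + (k + 1) * h := by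
  have hceil : ⌈(r - s) / h⌉ = k + 1 := by
    rw [Int.ceil_eq_iff]
    push_cast
    rw [add_sub_cancel_right, lt_div_iff₀ hh, div_le_iff₀ hh]
    constructor <;> linarith [hr.1, hr.2]
  rw [gridCeil, hceil]
  push_cast
  ring

lemma stronglyMeasurable_comp_gridCeil {E : Type*} [TopologicalSpace E] (z : ℝ → E) (s h : ℝ) :
    StronglyMeasurable fun r => z (gridCeil s h r) := by
  have hceil : Measurable fun r : ℝ => ⌈(r - s) / h⌉ :=
    Int.measurable_ceil.comp ((measurable_id.sub_const s).div_const h)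
  exact (StronglyMeasurable.of_discrete (f := fun k : ℤ => z (s + k * h))).comp_measurable hceil

lemma tendsto_gridCeil_nhdsGE {ι : Type*} {l : Filter ι} {h : ι → ℝ} (hpos : ∀ i, 0 < h i)
    (hlim : Tendsto h l (𝓝 0)) (r : ℝ) :
    Tendsto (fun i => gridCeil s (h i) r) l (𝓝[≥] r) := by
  refine tendsto_nhdsWithin_of_tendsto_nhds_of_eventually_within _ ?_
    (Eventually.of_forall fun i => le_gridCeil (hpos i) r)
  refine tendsto_of_tendsto_of_tendsto_of_le_of_le tendsto_const_nhds
    (by simpa using tendsto_const_nhds.add hlim) (fun i => le_gridCeil (hpos i) r)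
    (fun i => (gridCeil_lt_add (hpos i) r).le)

lemma gridCeil_mem_Ioc {t r : ℝ} (n : ℕ) (hr : r ∈ Ioc s t) :
    gridCeil s ((t - s) / (n + 1)) r ∈ Ioc s t := by
  have hh : 0 < (t - s) / (n + 1) := div_pos (sub_pos.2 (hr.1.trans_le hr.2)) n.cast_add_one_pos
  refine ⟨hr.1.trans_le (le_gridCeil hh r), ?_⟩
  have ht : s + ((n + 1 : ℤ) : ℝ) * ((t - s) / (n + 1)) = t := by
    push_cast
    field_simp
    ring
  have := gridCeil_le_of_le hh (r := r) (by rw [ht]; exact hr.2)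
  rwa [ht] at this

end Grid

lemma norm_sub_le_add_eVariationOn {α E : Type*} [LinearOrder α] [NormedAddCommGroup E]
    {f g : α → E} {S : Set α} (hf : BoundedVariationOn f S) (hg : BoundedVariationOn g S)
    {x y : α} (hx : x ∈ S) (hy : y ∈ S) :
    ‖f x - g x‖ ≤ ‖f y - g y‖ + (eVariationOn f S).toReal + (eVariationOn g S).toReal := by
  have hfxy := hf.dist_le hx hy
  have hgxy := hg.dist_le hx hy
  rw [dist_eq_norm] at hfxy hgxy
  calc ‖f x - g x‖ = ‖(f y - g y) + (f x - f y) - (g x - g y)‖ := by congr 1; abel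
    _ ≤ ‖f y - g y‖ + ‖f x - f y‖ + ‖g x - g y‖ := norm_sub_le_of_le (norm_add_le _ _) le_rfl
    _ ≤ _ := by gcongr

section Inner

variable {H : Type*} [NormedAddCommGroup H] [InnerProductSpace ℝ H]

lemma norm_sq_sub_norm_sq_le_two_mul_inner (u w : H) : ‖u‖ ^ 2 - ‖w‖ ^ 2 ≤ 2 * ⟪u, u - w⟫ := by
  rw [inner_sub_right, real_inner_self_eq_norm_sq]
  nlinarith [norm_sub_sq_real u w, sq_nonneg ‖u - w‖]

lemma norm_sq_sub_norm_sq_le_two_mul_sum_inner (x : ℕ → H) (N : ℕ) :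
    ‖x N‖ ^ 2 - ‖x 0‖ ^ 2 ≤ 2 * ∑ k ∈ Finset.range N, ⟪x (k + 1), x (k + 1) - x k⟫ := by
  rw [← Finset.sum_range_sub (fun k => ‖x k‖ ^ 2), Finset.mul_sum]
  exact Finset.sum_le_sum fun k _ => norm_sq_sub_norm_sq_le_two_mul_inner _ _

lemma inner_sub_nonpos_of_neg_mem_normalCone_s13 {K : Set H} {x u w : H}
    (hu : -u ∈ normalCone K x) (hw : w ∈ K) : ⟪x - w, u⟫ ≤ 0 := by
  have := hu w hw
  rwa [inner_neg_left, ← inner_neg_right, neg_sub, real_inner_comm] at this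

end Inner

section Integral

variable {H : Type*} [NormedAddCommGroup H] [InnerProductSpace ℝ H]
  {μ : Measure ℝ} {z v : ℝ → H} {s h : ℝ}

lemma sum_inner_setIntegral_Ioc_eq_setIntegral_gridCeil [CompleteSpace H] (hh : 0 < h) {N : ℕ}
    (hv : IntegrableOn v (Ioc s (s + N * h)) μ) :
    ∑ k ∈ Finset.range N, ⟪z (s + (k + 1) * h), ∫ r in Ioc (s + k * h) (s + (k + 1) * h), v r ∂μ⟫
      = ∫ r in Ioc s (s + N * h), ⟪z (gridCeil s h r), v r⟫ ∂μ := by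
  set p : ℕ → ℝ := fun k => s + k * h
  have hp : Monotone p := fun i j hij => by simp only [p]; gcongr
  have hpiece : ∀ k < N, IntegrableOn v (Ioc (p k) (p (k + 1))) μ := fun k hk =>
    hv.mono_set (Ioc_subset_Ioc (by simpa [p] using hp (Nat.zero_le k)) (hp hk))
  have hgrid : ∀ k : ℕ, ∀ r ∈ Ioc (p k) (p (k + 1)), gridCeil s h r = p (k + 1) := by
    intro k r hr
    simp only [p, Nat.cast_succ] at hr ⊢
    exact_mod_cast gridCeil_eq_of_mem_Ioc (k := k) hh (by exact_mod_cast hr)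
  have hterm : ∀ k < N, ⟪z (p (k + 1)), ∫ r in Ioc (p k) (p (k + 1)), v r ∂μ⟫
      = ∫ r in p k..p (k + 1), ⟪z (gridCeil s h r), v r⟫ ∂μ := fun k hk => by
    rw [intervalIntegral.integral_of_le (hp (Nat.le_succ k)), ← integral_inner (hpiece k hk)]
    exact setIntegral_congr_fun measurableSet_Ioc fun r hr => by rw [hgrid k r hr]
  have hint : ∀ k < N,
      IntervalIntegrable (fun r => ⟪z (gridCeil s h r), v r⟫) μ (p k) (p (k + 1)) :=
    fun k hk => (intervalIntegrable_iff_integrableOn_Ioc_of_le (hp (Nat.le_succ k))).2 <|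
      IntegrableOn.congr_fun ((hpiece k hk).const_inner (z (p (k + 1))))
        (fun r hr => by rw [hgrid k r hr]) measurableSet_Ioc
  have hsum := intervalIntegral.sum_integral_adjacent_intervals hint
  simp only [p, Nat.cast_zero, zero_mul, add_zero, Nat.cast_succ] at hsum hterm
  rw [Finset.sum_congr rfl fun k hk => hterm k (Finset.mem_range.1 hk), hsum,
    intervalIntegral.integral_of_le (le_add_of_nonneg_right (by positivity))]

lemma tendsto_setIntegral_inner_comp_gridCeil {t M : ℝ}
    (hz : ∀ r ∈ Ioc s t, ContinuousWithinAt z (Ici r) r) (hM : ∀ r ∈ Ioc s t, ‖z r‖ ≤ M)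
    (hv : IntegrableOn v (Ioc s t) μ) :
    Tendsto (fun n : ℕ => ∫ r in Ioc s t, ⟪z (gridCeil s ((t - s) / (n + 1)) r), v r⟫ ∂μ)
      atTop (𝓝 (∫ r in Ioc s t, ⟪z r, v r⟫ ∂μ)) := by
  refine tendsto_integral_of_dominated_convergence (fun r => M * ‖v r‖)
    (fun n => (stronglyMeasurable_comp_gridCeil z s _).aestronglyMeasurable.inner
      hv.aestronglyMeasurable) (hv.norm.const_mul M) (fun n => ?_) ?_
  · refine (ae_restrict_iff' measurableSet_Ioc).2 (ae_of_all _ fun r hr => ?_)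
    exact (norm_inner_le_norm _ _).trans
      (mul_le_mul_of_nonneg_right (hM _ (gridCeil_mem_Ioc n hr)) (norm_nonneg _))
  · refine (ae_restrict_iff' measurableSet_Ioc).2 (ae_of_all _ fun r hr => ?_)
    have hst : 0 < t - s := sub_pos.2 (hr.1.trans_le hr.2)
    have hmesh : Tendsto (fun n : ℕ => (t - s) / (n + 1)) atTop (𝓝 0) := by
      simpa [div_eq_mul_inv] using
        (tendsto_one_div_add_atTop_nhds_zero_nat (𝕜 := ℝ)).const_mul (t - s)
    exact ((hz r hr).tendsto.comp (tendsto_gridCeil_nhdsGE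
      (fun n => div_pos hst n.cast_add_one_pos) hmesh r)).inner tendsto_const_nhds

theorem norm_sq_sub_norm_sq_le_two_mul_setIntegral_inner [CompleteSpace H] {μ' : Measure ℝ}
    {v' : ℝ → H} {t M : ℝ} (hst : s < t)
    (hz : ∀ r ∈ Ioc s t, ContinuousWithinAt z (Ici r) r) (hM : ∀ r ∈ Ioc s t, ‖z r‖ ≤ M)
    (hv : IntegrableOn v (Ioc s t) μ) (hv' : IntegrableOn v' (Ioc s t) μ')
    (hinc : ∀ c d, s ≤ c → c ≤ d → d ≤ t →
      z d - z c = ∫ r in Ioc c d, v r ∂μ - ∫ r in Ioc c d, v' r ∂μ') :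
    ‖z t‖ ^ 2 - ‖z s‖ ^ 2 ≤
      2 * (∫ r in Ioc s t, ⟪z r, v r⟫ ∂μ - ∫ r in Ioc s t, ⟪z r, v' r⟫ ∂μ') := by
  refine le_of_tendsto_of_tendsto' tendsto_const_nhds
    (((tendsto_setIntegral_inner_comp_gridCeil hz hM hv).sub
      (tendsto_setIntegral_inner_comp_gridCeil hz hM hv')).const_mul 2) fun n => ?_
  set h := (t - s) / (n + 1)
  have hh : 0 < h := div_pos (sub_pos.2 hst) n.cast_add_one_pos
  have ht : s + ((n + 1 : ℕ) : ℝ) * h = t := by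
    simp only [h]
    push_cast
    field_simp
    ring
  have hgrid : ∀ k : ℕ, s + ((k + 1 : ℕ) : ℝ) * h = s + ((k : ℝ) + 1) * h := by
    intro k; push_cast; ring
  calc ‖z t‖ ^ 2 - ‖z s‖ ^ 2
      = ‖z (s + ((n + 1 : ℕ) : ℝ) * h)‖ ^ 2 - ‖z (s + ((0 : ℕ) : ℝ) * h)‖ ^ 2 := by
        rw [ht, Nat.cast_zero, zero_mul, add_zero]
    _ ≤ 2 * ∑ k ∈ Finset.range (n + 1),
        ⟪z (s + ((k + 1 : ℕ) : ℝ) * h), z (s + ((k + 1 : ℕ) : ℝ) * h) - z (s + k * h)⟫ :=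
      norm_sq_sub_norm_sq_le_two_mul_sum_inner (fun k : ℕ => z (s + k * h)) (n + 1)
    _ = 2 * (∑ k ∈ Finset.range (n + 1),
          ⟪z (s + (k + 1) * h), ∫ r in Ioc (s + k * h) (s + (k + 1) * h), v r ∂μ⟫ -
        ∑ k ∈ Finset.range (n + 1),
          ⟪z (s + (k + 1) * h), ∫ r in Ioc (s + k * h) (s + (k + 1) * h), v' r ∂μ'⟫) := by
        rw [← Finset.sum_sub_distrib]
        congr 1
        refine Finset.sum_congr rfl fun k hk => ?_
        have hk : (k : ℝ) + 1 ≤ ((n + 1 : ℕ) : ℝ) := by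
          exact_mod_cast Finset.mem_range.1 hk
        rw [← inner_sub_right, hgrid, ← hinc _ _ (le_add_of_nonneg_right (by positivity))
          (by gcongr; linarith) (by rw [← ht]; gcongr)]
    _ = _ := by
        rw [sum_inner_setIntegral_Ioc_eq_setIntegral_gridCeil hh (by rwa [ht]),
          sum_inner_setIntegral_Ioc_eq_setIntegral_gridCeil hh (by rwa [ht]), ht]

end Integral

theorem stmt13_general {H : Type*} [NormedAddCommGroup H] [InnerProductSpace ℝ H] [CompleteSpace H]
    (a b : ℝ)
    (C : ℝ → Closeds H)
    (y₀₁ y₀₂ : H)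
    (y₁ y₂ : ℝ → H)
    (h₁ : SweepingSolution a b C y₀₁ y₁) (h₂ : SweepingSolution a b C y₀₂ y₂) :
    AntitoneOn (fun t => ‖y₁ t - y₂ t‖ ^ 2) (Ico a b) := by
  intro s hs t ht hst
  rcases hst.eq_or_lt with rfl | hst
  · exact le_rfl
  obtain ⟨hc₁, hbv₁, μ₁, -, v₁, hv₁, hmem₁, hrep₁, hnc₁, -⟩ := h₁
  obtain ⟨hc₂, hbv₂, μ₂, -, v₂, hv₂, hmem₂, hrep₂, hnc₂, -⟩ := h₂
  have hIoc : Ioc s t ⊆ Ioo a b := fun r hr => ⟨hs.1.trans_lt hr.1, hr.2.trans_lt ht.2⟩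
  have hIco : Ioc s t ⊆ Ico a b := hIoc.trans Ioo_subset_Ico_self
  have key := norm_sq_sub_norm_sq_le_two_mul_setIntegral_inner (z := fun r => y₁ r - y₂ r) hst
    (fun r hr => (hc₁ r (hIco hr)).sub (hc₂ r (hIco hr)))
    (fun r hr => norm_sub_le_add_eVariationOn hbv₁ hbv₂ (hIco hr) hs) hv₁.integrableOn
    hv₂.integrableOn fun c d hsc hcd hdt => by
      rw [← hrep₁ c d (hs.1.trans hsc) hcd (hdt.trans_lt ht.2),
        ← hrep₂ c d (hs.1.trans hsc) hcd (hdt.trans_lt ht.2)]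
      abel
  have hsign₁ : ∫ r in Ioc s t, ⟪y₁ r - y₂ r, v₁ r⟫ ∂μ₁ ≤ 0 :=
    setIntegral_nonpos_ae measurableSet_Ioc <| by
      filter_upwards [hnc₁] with r hr hrst
      exact inner_sub_nonpos_of_neg_mem_normalCone_s13 (hr (hIoc hrst)) (hmem₂ r (hIco hrst))
  have hsign₂ : 0 ≤ ∫ r in Ioc s t, ⟪y₁ r - y₂ r, v₂ r⟫ ∂μ₂ :=
    setIntegral_nonneg_ae measurableSet_Ioc <| by
      filter_upwards [hnc₂] with r hr hrst
      rw [← neg_sub, inner_neg_left, neg_nonneg]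
      exact inner_sub_nonpos_of_neg_mem_normalCone_s13 (hr (hIoc hrst)) (hmem₁ r (hIco hrst))
  linarith

/-- contraction: if `y₁`, `y₂` solve the sweeping process driven by the same
right-continuous BV moving set `C` with initial conditions `y₀₁, y₀₂ ∈ C(a)`, then
`t ↦ ‖y₁(t) − y₂(t)‖²` is nonincreasing on `[a,b)`. -/
theorem stmt13 {H : Type*} [NormedAddCommGroup H] [InnerProductSpace ℝ H] [CompleteSpace H]
    (a b : ℝ) (hab : a < b)
    (C : ℝ → Closeds H)
    (hCconv : ∀ t ∈ Ico a b, Convex ℝ (C t : Set H))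
    (hCne : ∀ t ∈ Ico a b, (C t : Set H).Nonempty)
    (hCrc : ∀ t ∈ Ico a b, ContinuousWithinAt C (Ici t) t)
    (hCBV : eVariationOn C (Ico a b) ≠ ⊤)
    (y₀₁ y₀₂ : H) (hy₀₁ : y₀₁ ∈ (C a : Set H)) (hy₀₂ : y₀₂ ∈ (C a : Set H))
    (y₁ y₂ : ℝ → H)
    (h₁ : SweepingSolution a b C y₀₁ y₁) (h₂ : SweepingSolution a b C y₀₂ y₂) :
    AntitoneOn (fun t => ‖y₁ t - y₂ t‖ ^ 2) (Ico a b) :=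
  stmt13_general a b C y₀₁ y₀₂ y₁ y₂ h₁ h₂
end
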